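/- (Theorem 1: existence and uniqueness.) Let Θ₀ be a nonempty, convex, compact subset of L²(F) all of whose elements have E_F-mean zero. Then the population risk L_F attains its minimum on Θ₀, and the minimizer θ* ∈ Θ₀ is unique (as an element of L²(F)). -/

import Mathlib

open MeasureTheory

/-- The logistic function `σ(t) = 1/(1+e^{-t})`. -/
noncomputable def logistic (t : ℝ) : ℝ := 1 / (1 + Real.exp (-t))

/-- The pointwise cross-entropy loss `ℓ_p(t) = -p log σ(t) - (1-p) log σ(-t)`. -/
noncomputable def ceLoss (p t : ℝ) : ℝ :=
  -p * Real.log (logistic t) - (1 - p) * Real.log (logistic (-t))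

/-- The preference probability `p_F(x,y) = P_{Z∼F}{δ(Z,x) > δ(Z,y)}`. -/
noncomputable def prefProb {X : Type*} [MeasurableSpace X] (F : Measure X)
    (δ : X → X → ℝ) (x y : X) : ℝ :=
  (F {z | δ z y < δ z x}).toReal

/-- The population cross-entropy risk
`L_F(θ) = E_{X,Y i.i.d. ∼ F} [ℓ_{p_F(X,Y)}(θ(Y) - θ(X))]`. -/
noncomputable def popRisk {X : Type*} [MeasurableSpace X] (F : Measure X)
    (δ : X → X → ℝ) (θ : X → ℝ) : ℝ :=
  ∫ q, ceLoss (prefProb F δ q.1 q.2) (θ q.2 - θ q.1) ∂(F.prod F)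

/-!
For `p ∈ [0, 1]` the loss `ℓ_p` is `1`-Lipschitz and strictly convex: `ℓ_p' = σ - p` and
`σ' = σ (1 - σ) > 0`. The Lipschitz bound makes `L_F` `2`-Lipschitz on `L²(F)` (through
`‖·‖₁ ≤ ‖·‖₂`), so it attains its minimum on the compact set `Θ₀`.

`L_F` sees `θ` only through `θ(y) - θ(x)`, which forgets additive constants; strict convexity of
`ℓ_p` therefore makes `L_F` strictly convex along any segment whose endpoints have differences
that disagree on a set of positive `F ⊗ F`-measure. Two functions whose differences agree a.e.
differ by a constant a.e., and for mean-zero functions that constant is `0`. Hence `L_F` is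
strictly convex on `Θ₀`, and a strictly convex function has at most one minimizer.
-/

open Real Set

lemma logistic_pos (t : ℝ) : 0 < logistic t := by
  unfold logistic; positivity

lemma logistic_lt_one (t : ℝ) : logistic t < 1 := by
  rw [logistic, div_lt_one (by positivity)]
  linarith [exp_pos (-t)]

lemma ceLoss_eq_log_one_add_exp (p t : ℝ) :
    ceLoss p t = p * log (1 + exp (-t)) + (1 - p) * log (1 + exp t) := by
  simp only [ceLoss, logistic, one_div, log_inv, neg_neg]
  ring

lemma ceLoss_zero (p : ℝ) : ceLoss p 0 = log 2 := by
  rw [ceLoss_eq_log_one_add_exp]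
  norm_num
  ring

lemma continuous_ceLoss : Continuous fun q : ℝ × ℝ => ceLoss q.1 q.2 := by
  simp only [ceLoss_eq_log_one_add_exp]
  fun_prop (disch := intro; positivity)

lemma hasDerivAt_logistic (t : ℝ) :
    HasDerivAt logistic (logistic t * (1 - logistic t)) t := by
  have h := (((hasDerivAt_neg t).exp).const_add 1).inv (by positivity)
  rw [show logistic = fun s => (1 + exp (-s))⁻¹ from funext fun s => one_div _]
  refine h.congr_deriv ?_
  field_simp
  ring

lemma hasDerivAt_ceLoss (p t : ℝ) : HasDerivAt (ceLoss p) (logistic t - p) t := by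
  have h₁ := ((((hasDerivAt_neg t).exp).const_add 1).log (by positivity)).const_mul p
  have h₂ := (((hasDerivAt_exp t).const_add 1).log (by positivity)).const_mul (1 - p)
  rw [show ceLoss p = _ from funext (ceLoss_eq_log_one_add_exp p)]
  refine (h₁.add h₂).congr_deriv ?_
  simp only [logistic, exp_neg]
  field_simp
  ring

lemma strictConvexOn_ceLoss (p : ℝ) : StrictConvexOn ℝ univ (ceLoss p) := by
  have hderiv : deriv (ceLoss p) = fun s => logistic s - p :=
    funext fun s => (hasDerivAt_ceLoss p s).deriv
  refine strictConvexOn_of_deriv2_pos convex_univ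
    (fun s _ => (hasDerivAt_ceLoss p s).continuousAt.continuousWithinAt) fun t _ => ?_
  rw [Function.iterate_succ_apply, Function.iterate_one, hderiv,
    ((hasDerivAt_logistic t).sub_const p).deriv]
  exact mul_pos (logistic_pos t) (sub_pos.2 (logistic_lt_one t))

lemma lipschitzWith_ceLoss {p : ℝ} (hp : p ∈ Icc 0 1) : LipschitzWith 1 (ceLoss p) := by
  refine lipschitzWith_of_nnnorm_deriv_le (fun t => (hasDerivAt_ceLoss p t).differentiableAt)
    fun t => ?_
  rw [(hasDerivAt_ceLoss p t).deriv, ← NNReal.coe_le_coe, coe_nnnorm, Real.norm_eq_abs,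
    NNReal.coe_one, abs_le]
  constructor <;> linarith [logistic_pos t, logistic_lt_one t, hp.1, hp.2]

section Integral

variable {α : Type*} [MeasurableSpace α] {μ : Measure α}

lemma abs_ceLoss_le {p : ℝ} (hp : p ∈ Icc 0 1) (t : ℝ) : |ceLoss p t| ≤ log 2 + |t| := by
  have h := (lipschitzWith_ceLoss hp).dist_le_mul t 0
  rw [NNReal.coe_one, one_mul, ceLoss_zero, Real.dist_eq, Real.dist_eq, sub_zero] at h
  have hlog : |log 2| = log 2 := abs_of_nonneg (log_nonneg one_le_two)
  linarith [abs_sub_abs_le_abs_sub (ceLoss p t) (log 2)]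

lemma integrable_ceLoss_comp [IsFiniteMeasure μ] {p u : α → ℝ} (hp : ∀ a, p a ∈ Icc 0 1)
    (hpm : AEStronglyMeasurable p μ) (hu : Integrable u μ) :
    Integrable (fun a => ceLoss (p a) (u a)) μ :=
  ((integrable_const (log 2)).add hu.abs).mono'
    (continuous_ceLoss.comp_aestronglyMeasurable (hpm.prodMk hu.1))
    (ae_of_all _ fun a => abs_ceLoss_le (hp a) (u a))

lemma abs_integral_comp_sub_le {f : α → ℝ → ℝ} {K : NNReal} (hf : ∀ a, LipschitzWith K (f a))
    {u v : α → ℝ} (hu : Integrable (fun a => f a (u a)) μ)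
    (hv : Integrable (fun a => f a (v a)) μ) (huv : Integrable (u - v) μ) :
    |∫ a, f a (u a) ∂μ - ∫ a, f a (v a) ∂μ| ≤ K * ∫ a, |u a - v a| ∂μ := by
  rw [← integral_sub hu hv, ← integral_const_mul]
  refine abs_integral_le_integral_abs.trans
    (integral_mono (hu.sub hv).abs (huv.abs.const_mul _) fun a => ?_)
  simpa only [Real.dist_eq] using (hf a).dist_le_mul (u a) (v a)

lemma integral_comp_convexComb_lt {f : α → ℝ → ℝ} (hf : ∀ a, StrictConvexOn ℝ univ (f a))
    {u v : α → ℝ} {s t : ℝ} (hs : 0 < s) (ht : 0 < t) (hst : s + t = 1)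
    (hu : Integrable (fun a => f a (u a)) μ) (hv : Integrable (fun a => f a (v a)) μ)
    (hw : Integrable (fun a => f a (s * u a + t * v a)) μ) (huv : ¬ u =ᵐ[μ] v) :
    ∫ a, f a (s * u a + t * v a) ∂μ < s * ∫ a, f a (u a) ∂μ + t * ∫ a, f a (v a) ∂μ := by
  have hcomb : Integrable (fun a => s * f a (u a) + t * f a (v a)) μ :=
    (hu.const_mul s).add (hv.const_mul t)
  have hle (a : α) : f a (s * u a + t * v a) ≤ s * f a (u a) + t * f a (v a) :=
    (hf a).convexOn.2 (mem_univ _) (mem_univ _) hs.le ht.le hst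
  rw [← integral_const_mul, ← integral_const_mul,
    ← integral_add (hu.const_mul s) (hv.const_mul t)]
  refine (integral_mono hw hcomb hle).lt_of_ne fun heq => huv ?_
  filter_upwards [(integral_eq_iff_of_ae_le hw hcomb (ae_of_all _ hle)).1 heq] with a ha
  by_contra hne
  exact ((hf a).2 (mem_univ _) (mem_univ _) hne hs ht hst).ne ha

end Integral

def pairDiff {X : Type*} (θ : X → ℝ) (q : X × X) : ℝ := θ q.2 - θ q.1

lemma pairDiff_sub {X : Type*} (θ θ' : X → ℝ) : pairDiff (θ - θ') = pairDiff θ - pairDiff θ' := by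
  ext q
  simp only [pairDiff, Pi.sub_apply]
  ring

lemma pairDiff_smul_add_smul {X : Type*} (s t : ℝ) (θ θ' : X → ℝ) :
    pairDiff (s • θ + t • θ') = s • pairDiff θ + t • pairDiff θ' := by
  ext q
  simp only [pairDiff, Pi.add_apply, Pi.smul_apply, smul_eq_mul]
  ring

section PairDiff

variable {X : Type*} [MeasurableSpace X] {F : Measure X}

lemma integrable_pairDiff [IsFiniteMeasure F] {θ : X → ℝ} (hθ : Integrable θ F) :
    Integrable (pairDiff θ) (F.prod F) :=
  (hθ.comp_snd F).sub (hθ.comp_fst F)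

lemma integral_abs_pairDiff_le [IsProbabilityMeasure F] {θ : X → ℝ} (hθ : Integrable θ F) :
    ∫ q, |pairDiff θ q| ∂(F.prod F) ≤ 2 * ∫ x, |θ x| ∂F :=
  calc ∫ q, |pairDiff θ q| ∂(F.prod F) ≤ ∫ q, (|θ q.2| + |θ q.1|) ∂(F.prod F) :=
        integral_mono (integrable_pairDiff hθ).abs ((hθ.abs.comp_snd F).add (hθ.abs.comp_fst F))
          fun q => abs_sub _ _
    _ = 2 * ∫ x, |θ x| ∂F := by
        rw [integral_add (hθ.abs.comp_snd F) (hθ.abs.comp_fst F), integral_fun_snd (fun x => |θ x|),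
          integral_fun_fst (fun x => |θ x|), probReal_univ, one_smul, two_mul]

lemma pairDiff_ae_eq_of_ae_eq [SFinite F] {θ θ' : X → ℝ} (h : θ =ᵐ[F] θ') :
    pairDiff θ =ᵐ[F.prod F] pairDiff θ' := by
  filter_upwards [Measure.quasiMeasurePreserving_fst.ae_eq_comp h,
    Measure.quasiMeasurePreserving_snd.ae_eq_comp h] with q h₁ h₂
  simp only [pairDiff, ← Function.comp_apply (f := θ), ← Function.comp_apply (f := θ'), h₁, h₂]

lemma exists_ae_eq_const_of_pairDiff_ae_eq_zero [SFinite F] [NeZero F] {θ : X → ℝ}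
    (h : pairDiff θ =ᵐ[F.prod F] 0) : ∃ c, θ =ᵐ[F] fun _ => c := by
  have h' : ∀ᵐ x ∂F, ∀ᵐ y ∂F, θ y = θ x :=
    Measure.ae_ae_of_ae_prod (h.mono fun q hq => sub_eq_zero.1 hq)
  obtain ⟨x, hx⟩ := h'.exists
  exact ⟨θ x, hx⟩

lemma ae_eq_of_pairDiff_ae_eq [IsProbabilityMeasure F] {θ θ' : X → ℝ} (hθ : Integrable θ F)
    (hθ' : Integrable θ' F) (hint : ∫ x, θ x ∂F = ∫ x, θ' x ∂F)
    (h : pairDiff θ =ᵐ[F.prod F] pairDiff θ') : θ =ᵐ[F] θ' := by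
  obtain ⟨c, hc⟩ := exists_ae_eq_const_of_pairDiff_ae_eq_zero (θ := θ - θ') <| by
    rw [pairDiff_sub]
    filter_upwards [h] with q hq
    simp [hq]
  have hc0 : c = 0 := by
    simpa [integral_sub hθ hθ', hint] using (integral_congr_ae hc).symm
  filter_upwards [hc] with x hx
  simpa [hc0, sub_eq_zero] using hx

end PairDiff

lemma MeasureTheory.Lp.integral_norm_le_norm {α E : Type*} [MeasurableSpace α] {μ : Measure α}
    [IsProbabilityMeasure μ] [NormedAddCommGroup E] {p : ENNReal} (hp : 1 ≤ p) (f : Lp E p μ) :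
    ∫ x, ‖f x‖ ∂μ ≤ ‖f‖ := by
  have hf := Lp.aestronglyMeasurable f
  rw [← lpNorm_one_eq_integral_norm hf, Lp.norm_def, ← toReal_eLpNorm hf]
  exact ENNReal.toReal_mono (Lp.eLpNorm_ne_top f) (eLpNorm_le_eLpNorm_of_exponent_le hp hf)

section Risk

variable {X : Type*} [MeasurableSpace X] (F : Measure X) (δ : X → X → ℝ)

lemma measurable_prefProb [SFinite F] (hδ : Measurable fun q : X × X => δ q.1 q.2) :
    Measurable fun q : X × X => prefProb F δ q.1 q.2 :=
  (measurable_measure_prodMk_right (measurableSet_lt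
    (hδ.comp (measurable_fst.prodMk measurable_snd.snd))
    (hδ.comp (measurable_fst.prodMk measurable_snd.fst)))).ennreal_toReal

lemma popRisk_eq_integral_pairDiff (θ : X → ℝ) :
    popRisk F δ θ = ∫ q, ceLoss (prefProb F δ q.1 q.2) (pairDiff θ q) ∂(F.prod F) := rfl

variable [IsProbabilityMeasure F]

lemma prefProb_mem_Icc (x y : X) : prefProb F δ x y ∈ Icc 0 1 :=
  ⟨ENNReal.toReal_nonneg, ENNReal.toReal_le_of_le_ofReal zero_le_one (by simpa using prob_le_one)⟩

lemma integrable_ceLoss_prefProb (hδ : Measurable fun q : X × X => δ q.1 q.2) {u : X × X → ℝ}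
    (hu : Integrable u (F.prod F)) :
    Integrable (fun q => ceLoss (prefProb F δ q.1 q.2) (u q)) (F.prod F) :=
  integrable_ceLoss_comp (fun q => prefProb_mem_Icc F δ q.1 q.2)
    (measurable_prefProb F δ hδ).aestronglyMeasurable hu

lemma lipschitzWith_popRisk (hδ : Measurable fun q : X × X => δ q.1 q.2) :
    LipschitzWith 2 fun θ : Lp ℝ 2 F => popRisk F δ θ := by
  refine LipschitzWith.of_dist_le_mul fun θ₁ θ₂ => ?_
  have hL1 (θ : Lp ℝ 2 F) : Integrable θ F := (Lp.memLp θ).integrable one_le_two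
  have hint (θ : Lp ℝ 2 F) := integrable_pairDiff (hL1 θ)
  have hlip (q : X × X) : LipschitzWith 1 (ceLoss (prefProb F δ q.1 q.2)) :=
    lipschitzWith_ceLoss (prefProb_mem_Icc F δ q.1 q.2)
  have hdiff : ∫ q, |pairDiff θ₁ q - pairDiff θ₂ q| ∂(F.prod F) =
      ∫ q, |pairDiff ⇑(θ₁ - θ₂) q| ∂(F.prod F) := by
    refine integral_congr_ae ?_
    filter_upwards [pairDiff_ae_eq_of_ae_eq (Lp.coeFn_sub θ₁ θ₂)] with q hq
    rw [hq, pairDiff_sub, Pi.sub_apply]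
  calc dist (popRisk F δ θ₁) (popRisk F δ θ₂)
      ≤ (1 : NNReal) * ∫ q, |pairDiff θ₁ q - pairDiff θ₂ q| ∂(F.prod F) :=
        abs_integral_comp_sub_le hlip (integrable_ceLoss_prefProb F δ hδ (hint θ₁))
          (integrable_ceLoss_prefProb F δ hδ (hint θ₂)) ((hint θ₁).sub (hint θ₂))
    _ ≤ 2 * ∫ x, |(θ₁ - θ₂) x| ∂F := by
        rw [NNReal.coe_one, one_mul, hdiff]
        exact integral_abs_pairDiff_le (hL1 _)
    _ ≤ 2 * dist θ₁ θ₂ := by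
        rw [dist_eq_norm]
        gcongr
        simpa only [Real.norm_eq_abs] using Lp.integral_norm_le_norm one_le_two (θ₁ - θ₂)

theorem strictConvexOn_popRisk (hδ : Measurable fun q : X × X => δ q.1 q.2)
    {s : Set (Lp ℝ 2 F)} (hs : Convex ℝ s) (hmean : ∀ θ ∈ s, ∫ x, θ x ∂F = 0) :
    StrictConvexOn ℝ s fun θ : Lp ℝ 2 F => popRisk F δ θ := by
  refine ⟨hs, fun θ₁ h₁ θ₂ h₂ hne a b ha hb hab => ?_⟩
  have hL1 (θ : Lp ℝ 2 F) : Integrable θ F := (Lp.memLp θ).integrable one_le_two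
  have hint (θ : Lp ℝ 2 F) := integrable_pairDiff (hL1 θ)
  have hdiff : ¬ pairDiff θ₁ =ᵐ[F.prod F] pairDiff θ₂ := fun h =>
    hne <| Lp.ext <| ae_eq_of_pairDiff_ae_eq (hL1 θ₁) (hL1 θ₂)
      ((hmean θ₁ h₁).trans (hmean θ₂ h₂).symm) h
  have hcomb : popRisk F δ ⇑(a • θ₁ + b • θ₂) = ∫ q, ceLoss (prefProb F δ q.1 q.2)
      (a * pairDiff θ₁ q + b * pairDiff θ₂ q) ∂(F.prod F) := by
    rw [popRisk_eq_integral_pairDiff]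
    refine integral_congr_ae ?_
    have hcoe : ⇑(a • θ₁ + b • θ₂) =ᵐ[F] a • ⇑θ₁ + b • ⇑θ₂ := by
      filter_upwards [Lp.coeFn_add (a • θ₁) (b • θ₂), Lp.coeFn_smul a θ₁, Lp.coeFn_smul b θ₂]
        with x h₀ h₁ h₂
      simp only [h₀, Pi.add_apply, h₁, h₂]
    filter_upwards [pairDiff_ae_eq_of_ae_eq hcoe] with q hq
    rw [hq, pairDiff_smul_add_smul]
    rfl
  change popRisk F δ ⇑(a • θ₁ + b • θ₂) < a * popRisk F δ θ₁ + b * popRisk F δ θ₂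
  rw [hcomb]
  exact integral_comp_convexComb_lt (fun q => strictConvexOn_ceLoss _) ha hb hab
    (integrable_ceLoss_prefProb F δ hδ (hint θ₁)) (integrable_ceLoss_prefProb F δ hδ (hint θ₂))
    (integrable_ceLoss_prefProb F δ hδ (((hint θ₁).const_mul a).add ((hint θ₂).const_mul b)))
    hdiff

end Risk

/-- Theorem 1: existence and uniqueness: if `Θ₀` is a nonempty,
convex, compact subset of `L²(F)` all of whose elements have `F`-mean zero, then
the population risk `L_F` attains its minimum on `Θ₀` at a unique `θ* ∈ Θ₀`. -/
theorem popRisk_exists_unique_minimizer {X : Type*} [MeasurableSpace X]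
    (F : Measure X) [IsProbabilityMeasure F]
    (δ : X → X → ℝ) (hδ : Measurable fun q : X × X => δ q.1 q.2)
    (Θ₀ : Set (Lp ℝ 2 F)) (hne : Θ₀.Nonempty) (hconv : Convex ℝ Θ₀)
    (hcomp : IsCompact Θ₀) (hmean : ∀ θ ∈ Θ₀, (∫ x, θ x ∂F) = 0) :
    ∃! θs, θs ∈ Θ₀ ∧ ∀ θ ∈ Θ₀, popRisk F δ ⇑θs ≤ popRisk F δ ⇑θ := by
  obtain ⟨θs, hθs, hmin⟩ :=
    hcomp.exists_isMinOn hne (lipschitzWith_popRisk F δ hδ).continuous.continuousOn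
  exact ⟨θs, ⟨hθs, hmin⟩, fun θ ⟨hθ, hθmin⟩ =>
    (strictConvexOn_popRisk F δ hδ hconv hmean).eq_of_isMinOn hθmin hmin hθ hθs⟩
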